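/- arXiv:2601.16385 — 2 statements merged into one kernel-verified Lean document; each statement's English description precedes it below -/
import Mathlib

section
/- Let H be a separable real Hilbert space and let ε_1, …, ε_n be i.i.d. random elements of H with E[ε_1] = 0 and E‖ε_1‖⁴ < ∞. Set τ1 = E‖ε_1‖², τ2 = E[⟨ε_1, ε_2⟩²] (a second moment of the inner product of two independent copies), and τ3 = E‖ε_1‖⁴. Then for any matrix P ∈ ℝ^{n×n}, the quadratic form V = ∑_{i,j=1}^n P_{ij} ⟨ε_i, ε_j⟩ satisfies Var(V) = τ2 · trace(P(P + Pᵀ)) + (τ3 − τ1² − 2τ2) · ∑_{i=1}^n P_{ii}². -/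
/-!
Expanding `V²` and integrating term by term reduces the variance to the fourth moments
`E[⟪ε i, ε j⟫ ⟪ε k, ε l⟫]`. If some index, say `i`, occurs only once, the integrand is
`⟪ε i, W⟫` with `W = ⟪ε k, ε l⟫ • ε j` independent of `ε i`, so its expectation is
`⟪E ε i, E W⟫ = 0`. The surviving patterns `i = j, k = l` and `i = k, j = l` and `i = l, j = k`
contribute `τ1²`, `τ2`, `τ2` (and `τ3` when all four indices agree), and contracting this tensor
against `P i j * P k l` gives the formula.
-/

open scoped RealInnerProductSpace ENNReal
open MeasureTheory ProbabilityTheory Matrix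

def fourthMomentTensor {ι : Type*} [DecidableEq ι] (τ1 τ2 τ3 : ℝ) (i j k l : ι) : ℝ :=
  τ1 ^ 2 * ((if i = j then 1 else 0) * (if k = l then 1 else 0))
    + τ2 * ((if i = k then 1 else 0) * (if j = l then 1 else 0)
      + (if i = l then 1 else 0) * (if j = k then 1 else 0))
    + (τ3 - τ1 ^ 2 - 2 * τ2)
      * ((if i = j then 1 else 0) * (if j = k then 1 else 0) * (if k = l then 1 else 0))

def HasLoneIndex {ι : Type*} (i j k l : ι) : Prop :=
  (j ≠ i ∧ k ≠ i ∧ l ≠ i) ∨ (i ≠ j ∧ k ≠ j ∧ l ≠ j) ∨ (l ≠ k ∧ i ≠ k ∧ j ≠ k)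
    ∨ (k ≠ l ∧ i ≠ l ∧ j ≠ l)

theorem fourthMomentTensor_eq_zero_of_hasLoneIndex {ι : Type*} [DecidableEq ι] (τ1 τ2 τ3 : ℝ)
    {i j k l : ι} (h : HasLoneIndex i j k l) : fourthMomentTensor τ1 τ2 τ3 i j k l = 0 := by
  rcases h with ⟨h1, h2, h3⟩ | ⟨h1, h2, h3⟩ | ⟨h1, h2, h3⟩ | ⟨h1, h2, h3⟩ <;>
    simp [fourthMomentTensor, h1, h2, h3, h1.symm, h2.symm, h3.symm]

theorem Matrix.sum_mul_mul_fourthMomentTensor {ι : Type*} [Fintype ι] [DecidableEq ι]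
    (P : Matrix ι ι ℝ) (τ1 τ2 τ3 : ℝ) :
    ∑ i, ∑ j, ∑ k, ∑ l, P i j * P k l * fourthMomentTensor τ1 τ2 τ3 i j k l
      = τ1 ^ 2 * P.trace ^ 2 + τ2 * (P * (P + Pᵀ)).trace
        + (τ3 - τ1 ^ 2 - 2 * τ2) * ∑ i, P i i ^ 2 := by
  simp only [fourthMomentTensor, mul_add, mul_ite, mul_one, mul_zero, Finset.sum_add_distrib,
    Finset.sum_ite_eq, Finset.mem_univ, if_true, Finset.sum_ite_irrel, Finset.sum_const_zero,
    Matrix.trace, Matrix.diag, Matrix.mul_apply, Matrix.add_apply, Matrix.transpose_apply, sq,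
    ← Finset.mul_sum, ← Finset.sum_mul]
  ring

instance ENNReal.HolderTriple.instFourFourTwo : ENNReal.HolderTriple 4 4 2 :=
  ⟨by rw [← ENNReal.add_halves 2⁻¹, ENNReal.div_eq_inv_mul, ← ENNReal.mul_inv] <;> norm_num⟩

section

variable {Ω : Type*} [MeasurableSpace Ω] {μ : Measure Ω}

theorem MeasureTheory.integral_sum_mul_sq {κ : Type*} [Fintype κ] (c : κ → ℝ)
    (X : κ → Ω → ℝ) (hX : ∀ p q, Integrable (fun ω => X p ω * X q ω) μ) :
    ∫ ω, (∑ p, c p * X p ω) ^ 2 ∂μ = ∑ p, ∑ q, c p * c q * ∫ ω, X p ω * X q ω ∂μ := by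
  have hsq : ∀ ω, (∑ p, c p * X p ω) ^ 2 = ∑ p, ∑ q, c p * c q * (X p ω * X q ω) := by
    intro ω
    rw [sq, Finset.sum_mul_sum]
    exact Finset.sum_congr rfl fun p _ => Finset.sum_congr rfl fun q _ => by ring
  simp_rw [hsq]
  rw [integral_finsetSum _ fun p _ => integrable_finsetSum _ fun q _ => (hX p q).const_mul _]
  refine Finset.sum_congr rfl fun p _ => ?_
  rw [integral_finsetSum _ fun q _ => (hX p q).const_mul _]
  simp_rw [integral_const_mul]

variable {H : Type*} [NormedAddCommGroup H] [InnerProductSpace ℝ H]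

theorem MeasureTheory.MemLp.inner {p q r : ℝ≥0∞} [ENNReal.HolderTriple p q r] {X Y : Ω → H}
    (hX : MemLp X p μ) (hY : MemLp Y q μ) : MemLp (fun ω => ⟪X ω, Y ω⟫) r μ :=
  (innerSL ℝ).memLp_of_bilin r hX hY

theorem integrable_inner_mul_inner {X Y Z W : Ω → H} (hX : MemLp X 4 μ) (hY : MemLp Y 4 μ)
    (hZ : MemLp Z 4 μ) (hW : MemLp W 4 μ) :
    Integrable (fun ω => ⟪X ω, Y ω⟫ * ⟪Z ω, W ω⟫) μ :=
  (hX.inner (r := 2) hY).integrable_mul (hZ.inner (r := 2) hW)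

variable [CompleteSpace H] [MeasurableSpace H] [BorelSpace H]

theorem ProbabilityTheory.IndepFun.integral_inner_eq_zero {X W : Ω → H} (h : IndepFun X W μ)
    (hX : Integrable X μ) (hW : Integrable W μ) (hX0 : μ[X] = 0) :
    ∫ ω, ⟪X ω, W ω⟫ ∂μ = 0 := by
  calc ∫ ω, ⟪X ω, W ω⟫ ∂μ = ⟪∫ ω, X ω ∂μ, ∫ ω, W ω ∂μ⟫ := h.integral_bilin hX hW (innerSL ℝ)
    _ = 0 := by rw [hX0, inner_zero_left]

variable {ι : Type*} {ε : ι → Ω → H}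

theorem integral_inner_eq [DecidableEq ι] (hindep : iIndepFun ε μ)
    (hint : ∀ i, Integrable (ε i) μ) (hmean : ∀ i, μ[ε i] = 0)
    {τ1 : ℝ} (hτ1 : ∀ i, ∫ ω, ‖ε i ω‖ ^ 2 ∂μ = τ1) (i j : ι) :
    ∫ ω, ⟪ε i ω, ε j ω⟫ ∂μ = τ1 * if i = j then 1 else 0 := by
  rcases eq_or_ne i j with rfl | hij
  · simp [hτ1]
  · simp [(hindep.indepFun hij).integral_inner_eq_zero (hint i) (hint j) (hmean i), hij]

variable [SecondCountableTopology H] [IsFiniteMeasure μ]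

theorem integral_inner_mul_inner_eq_zero_of_ne (hmeas : ∀ i, Measurable (ε i))
    (hindep : iIndepFun ε μ) (hL4 : ∀ i, MemLp (ε i) 4 μ) {i j k l : ι} (hmean : μ[ε i] = 0)
    (hji : j ≠ i) (hki : k ≠ i) (hli : l ≠ i) :
    ∫ ω, ⟪ε i ω, ε j ω⟫ * ⟪ε k ω, ε l ω⟫ ∂μ = 0 := by
  classical
  set T : Finset ι := {j, k, l}
  have hT : Disjoint {i} T := by simp [T, hji.symm, hki.symm, hli.symm]
  have hj : j ∈ T := by simp [T]
  have hk : k ∈ T := by simp [T]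
  have hl : l ∈ T := by simp [T]
  have hindepW : IndepFun (ε i) (fun ω => ⟪ε k ω, ε l ω⟫ • ε j ω) μ := by
    have h := (hindep.indepFun_finset {i} T hT hmeas).comp
      (measurable_pi_apply (⟨i, Finset.mem_singleton_self i⟩ : ({i} : Finset ι)))
      (((measurable_pi_apply (⟨k, hk⟩ : T)).inner (𝕜 := ℝ)
        (measurable_pi_apply (⟨l, hl⟩ : T))).smul (measurable_pi_apply (⟨j, hj⟩ : T)))
    exact h
  have hW : Integrable (fun ω => ⟪ε k ω, ε l ω⟫ • ε j ω) μ :=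
    memLp_one_iff_integrable.1 <|
      ((hL4 j).mono_exponent (p := 2) (by norm_num)).smul ((hL4 k).inner (r := 2) (hL4 l))
  calc ∫ ω, ⟪ε i ω, ε j ω⟫ * ⟪ε k ω, ε l ω⟫ ∂μ
      = ∫ ω, ⟪ε i ω, ⟪ε k ω, ε l ω⟫ • ε j ω⟫ ∂μ := by
        simp_rw [real_inner_smul_right, mul_comm]
    _ = 0 := hindepW.integral_inner_eq_zero ((hL4 i).integrable (by norm_num)) hW hmean

theorem integral_inner_mul_inner_eq_zero_of_hasLoneIndex (hmeas : ∀ i, Measurable (ε i))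
    (hindep : iIndepFun ε μ) (hL4 : ∀ i, MemLp (ε i) 4 μ) (hmean : ∀ i, μ[ε i] = 0)
    {i j k l : ι} (h : HasLoneIndex i j k l) :
    ∫ ω, ⟪ε i ω, ε j ω⟫ * ⟪ε k ω, ε l ω⟫ ∂μ = 0 := by
  have hswap : ∀ a b c d : ι, ∫ ω, ⟪ε a ω, ε b ω⟫ * ⟪ε c ω, ε d ω⟫ ∂μ
      = ∫ ω, ⟪ε b ω, ε a ω⟫ * ⟪ε c ω, ε d ω⟫ ∂μ := fun a b c d => by
    simp_rw [real_inner_comm (ε a _)]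
  have hpair : ∀ a b c d : ι, ∫ ω, ⟪ε a ω, ε b ω⟫ * ⟪ε c ω, ε d ω⟫ ∂μ
      = ∫ ω, ⟪ε c ω, ε d ω⟫ * ⟪ε a ω, ε b ω⟫ ∂μ := fun a b c d => by
    simp_rw [mul_comm]
  have hzero := fun {a b c d : ι} =>
    integral_inner_mul_inner_eq_zero_of_ne (j := b) (k := c) (l := d) hmeas hindep hL4 (hmean a)
  rcases h with ⟨h1, h2, h3⟩ | ⟨h1, h2, h3⟩ | ⟨h1, h2, h3⟩ | ⟨h1, h2, h3⟩
  · exact hzero h1 h2 h3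
  · rw [hswap, hzero h1 h2 h3]
  · rw [hpair, hzero h1 h2 h3]
  · rw [hpair, hswap, hzero h1 h2 h3]

theorem integral_inner_mul_inner [DecidableEq ι] (hmeas : ∀ i, Measurable (ε i))
    (hindep : iIndepFun ε μ) (hL4 : ∀ i, MemLp (ε i) 4 μ) (hmean : ∀ i, μ[ε i] = 0)
    {τ1 τ2 τ3 : ℝ} (hτ1 : ∀ i, ∫ ω, ‖ε i ω‖ ^ 2 ∂μ = τ1)
    (hτ2 : ∀ i j, i ≠ j → ∫ ω, ⟪ε i ω, ε j ω⟫ ^ 2 ∂μ = τ2)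
    (hτ3 : ∀ i, ∫ ω, ‖ε i ω‖ ^ 4 ∂μ = τ3) (i j k l : ι) :
    ∫ ω, ⟪ε i ω, ε j ω⟫ * ⟪ε k ω, ε l ω⟫ ∂μ = fourthMomentTensor τ1 τ2 τ3 i j k l := by
  by_cases hlone : HasLoneIndex i j k l
  · rw [integral_inner_mul_inner_eq_zero_of_hasLoneIndex hmeas hindep hL4 hmean hlone,
      fourthMomentTensor_eq_zero_of_hasLoneIndex _ _ _ hlone]
  have hpattern : (i = j ∧ k = l) ∨ (i = k ∧ j = l) ∨ (i = l ∧ j = k) := by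
    unfold HasLoneIndex at hlone
    grind
  rw [fourthMomentTensor]
  by_cases hall : i = j ∧ j = k ∧ k = l
  · obtain ⟨rfl, rfl, rfl⟩ := hall
    simp_rw [real_inner_self_eq_norm_sq, ← pow_add, hτ3]
    simp only [↓reduceIte]
    ring
  rcases hpattern with ⟨rfl, rfl⟩ | ⟨rfl, rfl⟩ | ⟨rfl, rfl⟩
  · have hik : i ≠ k := fun h => hall ⟨rfl, h, rfl⟩
    have hprod : ∫ ω, ‖ε i ω‖ ^ 2 * ‖ε k ω‖ ^ 2 ∂μ
        = (∫ ω, ‖ε i ω‖ ^ 2 ∂μ) * ∫ ω, ‖ε k ω‖ ^ 2 ∂μ :=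
      (hindep.indepFun hik).integral_fun_comp_mul_comp (f := fun x => ‖x‖ ^ 2)
        (g := fun x => ‖x‖ ^ 2) (hmeas i).aemeasurable (hmeas k).aemeasurable
        (by fun_prop) (by fun_prop)
    simp_rw [real_inner_self_eq_norm_sq]
    rw [hprod, hτ1, hτ1]
    simp [hik, sq]
  · have hij : i ≠ j := fun h => hall ⟨h, h.symm, h⟩
    simp [← sq, hτ2 i j hij, hij, hij.symm]
  · have hij : i ≠ j := fun h => hall ⟨h, rfl, h.symm⟩
    simp [real_inner_comm (ε j _), ← sq, hτ2 j i hij.symm, hij, hij.symm]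

theorem integral_sq_sub_sq_integral_sum_mul_inner [Fintype ι] [DecidableEq ι]
    (hmeas : ∀ i, Measurable (ε i)) (hindep : iIndepFun ε μ) (hL4 : ∀ i, MemLp (ε i) 4 μ)
    (hmean : ∀ i, μ[ε i] = 0) {τ1 τ2 τ3 : ℝ} (hτ1 : ∀ i, ∫ ω, ‖ε i ω‖ ^ 2 ∂μ = τ1)
    (hτ2 : ∀ i j, i ≠ j → ∫ ω, ⟪ε i ω, ε j ω⟫ ^ 2 ∂μ = τ2)
    (hτ3 : ∀ i, ∫ ω, ‖ε i ω‖ ^ 4 ∂μ = τ3) (P : Matrix ι ι ℝ) :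
    (∫ ω, (∑ i, ∑ j, P i j * ⟪ε i ω, ε j ω⟫) ^ 2 ∂μ)
        - (∫ ω, ∑ i, ∑ j, P i j * ⟪ε i ω, ε j ω⟫ ∂μ) ^ 2
      = τ2 * (P * (P + Pᵀ)).trace + (τ3 - τ1 ^ 2 - 2 * τ2) * ∑ i, P i i ^ 2 := by
  have hL2 : ∀ i, MemLp (ε i) 2 μ := fun i => (hL4 i).mono_exponent (by norm_num)
  simp_rw [← Fintype.sum_prod_type' fun i j => P i j * ⟪ε i _, ε j _⟫]
  have hmean_V : ∫ ω, ∑ p : ι × ι, P p.1 p.2 * ⟪ε p.1 ω, ε p.2 ω⟫ ∂μ = τ1 * P.trace := by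
    rw [integral_finsetSum _ fun p _ =>
      (memLp_one_iff_integrable.1 ((hL2 p.1).inner (hL2 p.2))).const_mul _]
    simp [integral_const_mul, Fintype.sum_prod_type,
      integral_inner_eq hindep (fun i => (hL4 i).integrable (by norm_num)) hmean hτ1,
      Matrix.trace, Finset.mul_sum, mul_comm]
  have hsecond_V : ∫ ω, (∑ p : ι × ι, P p.1 p.2 * ⟪ε p.1 ω, ε p.2 ω⟫) ^ 2 ∂μ
      = ∑ i, ∑ j, ∑ k, ∑ l, P i j * P k l * fourthMomentTensor τ1 τ2 τ3 i j k l := by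
    rw [integral_sum_mul_sq _ _ fun p q =>
      integrable_inner_mul_inner (hL4 p.1) (hL4 p.2) (hL4 q.1) (hL4 q.2)]
    simp only [Fintype.sum_prod_type,
      integral_inner_mul_inner hmeas hindep hL4 hmean hτ1 hτ2 hτ3]
  rw [hmean_V, hsecond_V, Matrix.sum_mul_mul_fourthMomentTensor]
  ring

end

theorem ProbabilityTheory.IdentDistrib.prodMk_of_indepFun {Ω Ω' α β : Type*} [MeasurableSpace Ω]
    [MeasurableSpace Ω'] [MeasurableSpace α] [MeasurableSpace β] {μ : Measure Ω} {ν : Measure Ω'}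
    [IsFiniteMeasure μ] [IsFiniteMeasure ν] {f : Ω → α} {g : Ω → β} {f' : Ω' → α} {g' : Ω' → β}
    (hf : IdentDistrib f f' μ ν) (hg : IdentDistrib g g' μ ν) (h : IndepFun f g μ)
    (h' : IndepFun f' g' ν) :
    IdentDistrib (fun ω => (f ω, g ω)) (fun ω => (f' ω, g' ω)) μ ν where
  aemeasurable_fst := hf.aemeasurable_fst.prodMk hg.aemeasurable_fst
  aemeasurable_snd := hf.aemeasurable_snd.prodMk hg.aemeasurable_snd
  map_eq := by
    rw [h.map_prod_eq_prod_map_map hf.aemeasurable_fst hg.aemeasurable_fst,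
      h'.map_prod_eq_prod_map_map hf.aemeasurable_snd hg.aemeasurable_snd, hf.map_eq, hg.map_eq]

theorem variance_of_quadratic_form_general
    {H : Type*} [NormedAddCommGroup H] [InnerProductSpace ℝ H] [CompleteSpace H]
    [SecondCountableTopology H] [MeasurableSpace H] [BorelSpace H]
    {Ω : Type*} [MeasurableSpace Ω] (μ : Measure Ω) [IsProbabilityMeasure μ]
    (ε : ℕ → Ω → H)
    (hmeas : ∀ i, Measurable (ε i))
    (hindep : iIndepFun ε μ)
    (hident : ∀ i, IdentDistrib (ε i) (ε 0) μ μ)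
    (hmean : ∫ ω, ε 0 ω ∂μ = 0)
    (hfourth : Integrable (fun ω => ‖ε 0 ω‖ ^ 4) μ)
    (τ1 τ2 τ3 : ℝ)
    (hτ1 : τ1 = ∫ ω, ‖ε 0 ω‖ ^ 2 ∂μ)
    (hτ2 : τ2 = ∫ ω, ⟪ε 0 ω, ε 1 ω⟫ ^ 2 ∂μ)
    (hτ3 : τ3 = ∫ ω, ‖ε 0 ω‖ ^ 4 ∂μ)
    (n : ℕ) (P : Matrix (Fin n) (Fin n) ℝ)
    (V : Ω → ℝ) (hV : ∀ ω, V ω = ∑ i, ∑ j, P i j * ⟪ε i ω, ε j ω⟫) :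
    (∫ ω, V ω ^ 2 ∂μ) - (∫ ω, V ω ∂μ) ^ 2
      = τ2 * Matrix.trace (P * (P + Pᵀ)) + (τ3 - τ1 ^ 2 - 2 * τ2) * ∑ i, P i i ^ 2 := by
  have hL4 : ∀ i, MemLp (ε i) 4 μ := fun i => (hident i).memLp_iff.2 <|
    (integrable_norm_rpow_iff (hmeas 0).aestronglyMeasurable (by norm_num) (by norm_num)).1
      (by simpa using hfourth)
  have hτ2' : ∀ i j : Fin n, i ≠ j → ∫ ω, ⟪ε i ω, ε j ω⟫ ^ 2 ∂μ = τ2 := fun i j hij =>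
    (((hident i).prodMk_of_indepFun ((hident j).trans (hident 1).symm)
      (hindep.indepFun (Fin.val_injective.ne hij)) (hindep.indepFun zero_ne_one)).comp
      ((measurable_fst.inner measurable_snd).pow_const 2)).integral_eq.trans hτ2.symm
  simp_rw [hV]
  exact integral_sq_sub_sq_integral_sum_mul_inner (ε := fun i : Fin n => ε i) (fun i => hmeas i)
    (hindep.precomp Fin.val_injective) (fun i => hL4 i)
    (fun i => (hident i).integral_eq.trans hmean)
    (fun i => ((hident i).comp (measurable_norm.pow_const 2)).integral_eq.trans hτ1.symm) hτ2'
    (fun i => ((hident i).comp (measurable_norm.pow_const 4)).integral_eq.trans hτ3.symm) P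

/-- Variance of a Hilbert-valued quadratic form. For i.i.d. mean-zero `H`-valued random
elements `ε 0, ε 1, …` with `E‖ε‖⁴ < ∞`, setting `τ1 = E‖ε‖²`, `τ2 = E⟪ε, ε'⟫²` (two
independent copies) and `τ3 = E‖ε‖⁴`, the quadratic form
`V = ∑_{i,j<n} P_{ij} ⟪ε i, ε j⟫` satisfies
`Var(V) = τ2·trace(P(P+Pᵀ)) + (τ3 − τ1² − 2τ2)·∑ᵢ P_{ii}²`. -/
theorem variance_of_quadratic_form
    {H : Type*} [NormedAddCommGroup H] [InnerProductSpace ℝ H] [CompleteSpace H]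
    [SecondCountableTopology H] [MeasurableSpace H] [BorelSpace H]
    {Ω : Type*} [MeasurableSpace Ω] (μ : Measure Ω) [IsProbabilityMeasure μ]
    (ε : ℕ → Ω → H)
    (hmeas : ∀ i, Measurable (ε i))
    (hindep : iIndepFun ε μ)
    (hident : ∀ i, IdentDistrib (ε i) (ε 0) μ μ)
    (hint : Integrable (ε 0) μ)
    (hmean : ∫ ω, ε 0 ω ∂μ = 0)
    (hfourth : Integrable (fun ω => ‖ε 0 ω‖ ^ 4) μ)
    (τ1 τ2 τ3 : ℝ)
    (hτ1 : τ1 = ∫ ω, ‖ε 0 ω‖ ^ 2 ∂μ)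
    (hτ2 : τ2 = ∫ ω, ⟪ε 0 ω, ε 1 ω⟫ ^ 2 ∂μ)
    (hτ3 : τ3 = ∫ ω, ‖ε 0 ω‖ ^ 4 ∂μ)
    (n : ℕ) (P : Matrix (Fin n) (Fin n) ℝ)
    (V : Ω → ℝ) (hV : ∀ ω, V ω = ∑ i, ∑ j, P i j * ⟪ε i ω, ε j ω⟫) :
    (∫ ω, V ω ^ 2 ∂μ) - (∫ ω, V ω ∂μ) ^ 2
      = τ2 * Matrix.trace (P * (P + Pᵀ)) + (τ3 - τ1 ^ 2 - 2 * τ2) * ∑ i, P i i ^ 2 :=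
  variance_of_quadratic_form_general μ ε hmeas hindep hident hmean hfourth τ1 τ2 τ3 hτ1 hτ2 hτ3 n P
    V hV
end

section
/- Let r_1, …, r_{n+1} be i.i.d. real-valued random variables on a probability space, and for k ∈ {1, …, n} let r_{(k)} denote the k-th smallest value among r_1, …, r_n. Then P( r_{n+1} ≤ r_{(k)} ) ≥ k/(n+1). -/
/-!
By exchangeability, the event that `r j` is at most the `k`-th smallest of the other `n` values
has the same probability for every `j`. For every outcome at least `k` indices `j` lie in this
event (all `j` with `r j` at most the `k`-th smallest of all `n + 1` values do), so summing over
`j` gives `(n + 1) P ≥ k`.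
-/

open MeasureTheory ProbabilityTheory

/-- The `k`-th smallest value (`k` zero-indexed) among `v 0, …, v (n-1)`. -/
noncomputable def kthSmallest {n : ℕ} (v : Fin n → ℝ) (k : Fin n) : ℝ :=
  (Multiset.sort (Multiset.ofList (List.ofFn v)) (· ≤ ·)).get
    (k.cast (by simp [Multiset.length_sort]))

open Finset

theorem Monotone.mem_iff_lt_card_filter {α : Type*} [Preorder α] {N : ℕ} {f : Fin N → α}
    (hf : Monotone f) {s : Set α} (hs : IsLowerSet s) [DecidablePred (· ∈ s)] (j : Fin N) :
    f j ∈ s ↔ (j : ℕ) < #{i | f i ∈ s} := by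
  constructor
  · intro hj
    have : Iic j ⊆ ({i | f i ∈ s} : Finset (Fin N)) := fun i hi =>
      mem_filter.2 ⟨mem_univ i, hs (hf (mem_Iic.1 hi)) hj⟩
    simpa using card_le_card this
  · intro hlt
    by_contra hj
    have : ({i | f i ∈ s} : Finset (Fin N)) ⊆ Iio j := fun i hi =>
      mem_Iio.2 (lt_of_not_ge fun hji => hj (hs (hf hji) (mem_filter.1 hi).2))
    simpa using (card_le_card this).trans_lt' hlt

theorem List.countP_ofFn {α : Type*} {N : ℕ} (f : Fin N → α) (p : α → Prop)
    [DecidablePred p] :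
    (List.ofFn f).countP (fun a => decide (p a)) = #{i | p (f i)} := by
  rw [← Multiset.coe_countP, ← Fin.univ_val_map, Multiset.countP_map, Finset.card,
    Finset.filter_val]

theorem kthSmallest_mem_iff_lt_card {n : ℕ} (v : Fin n → ℝ) (m : Fin n) {s : Set ℝ}
    (hs : IsLowerSet s) [DecidablePred (· ∈ s)] :
    kthSmallest v m ∈ s ↔ (m : ℕ) < #{i | v i ∈ s} := by
  set l := Multiset.sort (Multiset.ofList (List.ofFn v)) (· ≤ ·)
  have hmono : Monotone l.get :=
    (List.sortedLE_iff_pairwise.2 (Multiset.pairwise_sort _ _)).monotone_get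
  have hcount : #{i | l.get i ∈ s} = #{i | v i ∈ s} := by
    have hperm : l.Perm (List.ofFn v) := Multiset.coe_eq_coe.1 (Multiset.sort_eq _ _)
    rw [← List.countP_ofFn, ← List.countP_ofFn, List.ofFn_get, hperm.countP_eq]
  rw [kthSmallest, hmono.mem_iff_lt_card_filter hs, hcount, Fin.val_cast]

theorem kthSmallest_le_iff {n : ℕ} (v : Fin n → ℝ) (m : Fin n) (c : ℝ) :
    kthSmallest v m ≤ c ↔ (m : ℕ) < #{i | v i ≤ c} :=
  kthSmallest_mem_iff_lt_card v m (isLowerSet_Iic c)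

theorem kthSmallest_lt_iff {n : ℕ} (v : Fin n → ℝ) (m : Fin n) (c : ℝ) :
    kthSmallest v m < c ↔ (m : ℕ) < #{i | v i < c} :=
  kthSmallest_mem_iff_lt_card v m (isLowerSet_Iio c)

theorem measurable_kthSmallest {n : ℕ} (m : Fin n) :
    Measurable fun v : Fin n → ℝ => kthSmallest v m := by
  refine measurable_of_Iio fun c => ?_
  have hcard : Measurable fun v : Fin n → ℝ => #{i | v i < c} := by
    simp only [card_filter]
    exact Finset.measurable_sum _ fun i _ =>
      Measurable.ite (measurableSet_lt (measurable_pi_apply i) measurable_const)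
        measurable_const measurable_const
  simp only [Set.preimage, Set.mem_Iio, kthSmallest_lt_iff]
  exact measurableSet_lt measurable_const hcard

def lastLeKthSmallest {n : ℕ} (m : Fin n) : Set (Fin (n + 1) → ℝ) :=
  {x | x (Fin.last n) ≤ kthSmallest (fun i => x i.castSucc) m}

theorem measurableSet_lastLeKthSmallest {n : ℕ} (m : Fin n) :
    MeasurableSet (lastLeKthSmallest m) :=
  measurableSet_le (measurable_pi_apply _)
    ((measurable_kthSmallest m).comp
      (measurable_pi_lambda _ fun _ => measurable_pi_apply _))

open Classical in
theorem succ_le_card_comp_swap_mem_lastLeKthSmallest {n : ℕ} (x : Fin (n + 1) → ℝ)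
    (m : Fin n) :
    (m : ℕ) + 1 ≤ #{j | x ∘ Equiv.swap j (Fin.last n) ∈ lastLeKthSmallest m} := by
  set c := kthSmallest x m.castSucc
  have hle : (m : ℕ) < #{j | x j ≤ c} := (kthSmallest_le_iff x m.castSucc c).1 le_rfl
  have hlt : #{j | x j < c} ≤ (m : ℕ) :=
    not_lt.1 ((kthSmallest_lt_iff x _ c).not.1 (lt_irrefl c))
  refine hle.trans_le (card_le_card fun j hj => mem_filter.2 ⟨mem_univ j, ?_⟩)
  have hjc : x j ≤ c := (mem_filter.1 hj).2
  set σ := Equiv.swap j (Fin.last n)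
  have hcount : #{i : Fin n | x (σ i.castSucc) < x j} ≤ #{i | x i < c} :=
    card_le_card_of_injOn (fun i => σ i.castSucc)
      (fun i hi => mem_filter.2 ⟨mem_univ _, ((mem_filter.1 hi).2).trans_le hjc⟩)
      (fun a _ b _ hab => Fin.castSucc_injective _ (σ.injective hab))
  show x (σ (Fin.last n)) ≤ kthSmallest (fun i => x (σ i.castSucc)) m
  rw [Equiv.swap_apply_right, ← not_lt, kthSmallest_lt_iff]
  omega

theorem measurePreserving_comp_perm {ι α : Type*} [Fintype ι] [MeasurableSpace α]
    (ν : Measure α) [SigmaFinite ν] (σ : Equiv.Perm ι) :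
    MeasurePreserving (fun x : ι → α => x ∘ σ)
      (Measure.pi fun _ => ν) (Measure.pi fun _ => ν) :=
  measurePreserving_arrowCongr' (fun _ => ν) (fun _ => ν) σ.symm (MeasurableEquiv.refl α)
    fun _ => .id ν

open Classical in
theorem natCast_mul_measure_univ_le_card_mul {α ι : Type*} [MeasurableSpace α]
    [Fintype ι] (μ : Measure α) {g : ι → α → α} (hg : ∀ j, MeasurePreserving (g j) μ μ)
    {S : Set α} (hS : MeasurableSet S) {k : ℕ} (hk : ∀ x, k ≤ #{j | g j x ∈ S}) :
    k * μ Set.univ ≤ Fintype.card ι * μ S := by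
  have hA : ∀ j, MeasurableSet (g j ⁻¹' S) := fun j => (hg j).measurable hS
  have hcount : ∀ x, (k : ENNReal) ≤ ∑ j, (g j ⁻¹' S).indicator 1 x := fun x => by
    simp only [Set.indicator_apply, Set.mem_preimage, Pi.one_apply]
    exact_mod_cast (card_filter _ _).symm.trans_ge (hk x)
  calc (k : ENNReal) * μ Set.univ = ∫⁻ _, (k : ENNReal) ∂μ := by
        rw [lintegral_const, mul_comm]
    _ ≤ ∫⁻ x, ∑ j, (g j ⁻¹' S).indicator 1 x ∂μ := lintegral_mono hcount
    _ = ∑ j, μ (g j ⁻¹' S) := by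
      rw [lintegral_finsetSum _ fun j _ => measurable_one.indicator (hA j)]
      exact Finset.sum_congr rfl fun j _ => lintegral_indicator_one (hA j)
    _ = Fintype.card ι * μ S := by
      simp only [(hg _).measure_preimage hS.nullMeasurableSet, sum_const, card_univ,
        nsmul_eq_mul]

/-- Split-conformal coverage bound: for i.i.d. real random variables `r 0, …, r n`
(that is, `n + 1` of them), and `1 ≤ k ≤ n`, the probability that the last one is at
most the `k`-th smallest of the first `n` is at least `k/(n+1)`. -/
theorem split_conformal_coverage
    {Ω : Type*} [MeasurableSpace Ω] (μ : Measure Ω) [IsProbabilityMeasure μ]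
    (n : ℕ) (r : Fin (n + 1) → Ω → ℝ)
    (hindep : iIndepFun r μ)
    (hident : ∀ i j, IdentDistrib (r i) (r j) μ μ)
    (k : ℕ) (hk1 : 1 ≤ k) (hk2 : k ≤ n) :
    ENNReal.ofReal ((k : ℝ) / (n + 1)) ≤
      μ {ω | r (Fin.last n) ω
          ≤ kthSmallest (fun i : Fin n => r i.castSucc ω) ⟨k - 1, by omega⟩} := by
  set m : Fin n := ⟨k - 1, by omega⟩
  have hr (i) : AEMeasurable (r i) μ := (hident i i).aemeasurable_fst
  set ν := μ.map (r (Fin.last n))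
  have : IsProbabilityMeasure ν := Measure.isProbabilityMeasure_map (hr _)
  have hlaw : μ.map (fun ω i => r i ω) = Measure.pi fun _ => ν := by
    rw [hindep.map_fun_eq_pi_map hr]
    exact congrArg Measure.pi (funext fun i => (hident i (Fin.last n)).map_eq)
  have hcover : (k : ENNReal) ≤ (n + 1) * Measure.pi (fun _ => ν) (lastLeKthSmallest m) := by
    have := natCast_mul_measure_univ_le_card_mul (Measure.pi fun _ => ν)
      (fun j => measurePreserving_comp_perm ν (Equiv.swap j (Fin.last n)))
      (measurableSet_lastLeKthSmallest m)
      fun x => (show k ≤ k - 1 + 1 by omega).trans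
        (succ_le_card_comp_swap_mem_lastLeKthSmallest x m)
    simpa using this
  change _ ≤ μ ((fun ω i => r i ω) ⁻¹' lastLeKthSmallest m)
  rw [← Measure.map_apply_of_aemeasurable (aemeasurable_pi_lambda _ hr)
    (measurableSet_lastLeKthSmallest m), hlaw, ENNReal.ofReal_div_of_pos (by positivity)]
  refine ENNReal.div_le_of_le_mul ?_
  rw [ENNReal.ofReal_natCast, mul_comm]
  exact_mod_cast hcover
end
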